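/- The function g(δ) = φ(δ)/δ - (1 - Φ(δ)), where φ and Φ are the standard normal PDF and CDF, is continuous and strictly decreasing on (0, ∞), tends to +∞ as δ → 0⁺, and tends to 0 as δ → ∞. Consequently, for every ε ∈ (0, 1), the Huber minimax equation φ(δ)/δ - (1 - Φ(δ)) = ε/(2(1-ε)) has a unique solution δ*(ε) ∈ (0, ∞). -/

import Mathlib

open MeasureTheory

/-- Standard normal density. -/
noncomputable def stdGaussPDF (x : ℝ) : ℝ :=
  (Real.sqrt (2 * Real.pi))⁻¹ * Real.exp (-x ^ 2 / 2)

/-- Standard normal CDF. -/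
noncomputable def stdGaussCDF (x : ℝ) : ℝ := ∫ t in Set.Iic x, stdGaussPDF t

/-- Huber's minimax function `g(δ) = φ(δ)/δ - (1 - Φ(δ))`. -/
noncomputable def huberG (δ : ℝ) : ℝ := stdGaussPDF δ / δ - (1 - stdGaussCDF δ)

lemma stdGaussPDF_eq : stdGaussPDF = ProbabilityTheory.gaussianPDFReal 0 1 := by
  funext x
  simp [stdGaussPDF, ProbabilityTheory.gaussianPDFReal, neg_div]

lemma stdGaussPDF_pos (x : ℝ) : 0 < stdGaussPDF x := by
  unfold stdGaussPDF
  have := Real.pi_pos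
  positivity

lemma stdGaussPDF_cont : Continuous stdGaussPDF := by
  unfold stdGaussPDF; fun_prop

lemma stdGaussPDF_integrable : Integrable stdGaussPDF := by
  rw [stdGaussPDF_eq]; exact ProbabilityTheory.integrable_gaussianPDFReal 0 1

lemma hasDerivAt_pdf (x : ℝ) : HasDerivAt stdGaussPDF (-x * stdGaussPDF x) x := by
  have h1 : HasDerivAt (fun y : ℝ => -y ^ 2 / 2) (-x) x := by
    have := ((hasDerivAt_pow 2 x).neg.div_const 2)
    refine this.congr_deriv ?_; ring
  have h2 := (h1.exp).const_mul (Real.sqrt (2 * Real.pi))⁻¹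
  refine h2.congr_deriv ?_
  unfold stdGaussPDF; ring

lemma hasDerivAt_cdf (x : ℝ) : HasDerivAt stdGaussCDF (stdGaussPDF x) x := by
  have key : ∀ y : ℝ, stdGaussCDF y = stdGaussCDF 0 + ∫ t in (0:ℝ)..y, stdGaussPDF t := by
    intro y
    have := intervalIntegral.integral_Iic_sub_Iic (stdGaussPDF_integrable.integrableOn)
      (stdGaussPDF_integrable.integrableOn) (a := 0) (b := y)
    unfold stdGaussCDF
    linarith
  have hd : HasDerivAt (fun y => stdGaussCDF 0 + ∫ t in (0:ℝ)..y, stdGaussPDF t)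
      (stdGaussPDF x) x := by
    exact (intervalIntegral.integral_hasDerivAt_right
      (stdGaussPDF_integrable.intervalIntegrable)
      (stdGaussPDF_cont.stronglyMeasurableAtFilter _ _)
      (stdGaussPDF_cont.continuousAt)).const_add _
  exact hd.congr_of_eventuallyEq (Filter.Eventually.of_forall key)

lemma cdf_tendsto_one : Filter.Tendsto stdGaussCDF Filter.atTop (nhds 1) := by
  set μ : Measure ℝ := volume.withDensity (fun x => ENNReal.ofReal (stdGaussPDF x)) with hμ
  have hmeas : Measurable (fun x => ENNReal.ofReal (stdGaussPDF x)) :=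
    stdGaussPDF_cont.measurable.ennreal_ofReal
  have huniv : μ Set.univ = 1 := by
    rw [hμ, withDensity_apply _ MeasurableSet.univ, Measure.restrict_univ, stdGaussPDF_eq]
    exact ProbabilityTheory.lintegral_gaussianPDFReal_eq_one 0 one_ne_zero
  have hIic : ∀ x, stdGaussCDF x = (μ (Set.Iic x)).toReal := by
    intro x
    rw [hμ, withDensity_apply _ measurableSet_Iic]
    rw [stdGaussCDF, integral_eq_lintegral_of_nonneg_ae
      (Filter.Eventually.of_forall fun t => (stdGaussPDF_pos t).le)
      stdGaussPDF_cont.aestronglyMeasurable.restrict]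
  have h1 := tendsto_measure_Iic_atTop μ
  rw [huniv] at h1
  have h2 : Filter.Tendsto (fun x => (μ (Set.Iic x)).toReal) Filter.atTop
      (nhds (ENNReal.toReal 1)) := (ENNReal.tendsto_toReal (by simp)).comp h1
  simp only [ENNReal.toReal_one] at h2
  exact h2.congr (fun x => (hIic x).symm)

lemma cdf_nonneg (x : ℝ) : 0 ≤ stdGaussCDF x :=
  integral_nonneg fun t => (stdGaussPDF_pos t).le

lemma hasDerivAt_huberG {δ : ℝ} (hδ : δ ≠ 0) :
    HasDerivAt huberG (-(stdGaussPDF δ) / δ ^ 2) δ := by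
  have hdiv := (hasDerivAt_pdf δ).div (hasDerivAt_id δ) hδ
  have h := hdiv.sub ((hasDerivAt_const δ (1:ℝ)).sub (hasDerivAt_cdf δ))
  have heq : huberG = fun y => stdGaussPDF y / id y - (1 - stdGaussCDF y) := rfl
  rw [heq]
  refine h.congr_deriv ?_
  simp only [id]
  field_simp
  ring

lemma huberG_contOn : ContinuousOn huberG (Set.Ioi 0) := fun x hx =>
  ((hasDerivAt_huberG (ne_of_gt hx)).continuousAt).continuousWithinAt

lemma huberG_anti : StrictAntiOn huberG (Set.Ioi 0) := by
  apply strictAntiOn_of_deriv_neg (convex_Ioi 0) huberG_contOn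
  intro x hx
  rw [interior_Ioi] at hx
  rw [(hasDerivAt_huberG (ne_of_gt hx)).deriv]
  exact div_neg_of_neg_of_pos (neg_neg_of_pos (stdGaussPDF_pos x)) (pow_pos hx 2)

lemma huberG_tendsto_atTop : Filter.Tendsto huberG (nhdsWithin 0 (Set.Ioi 0)) Filter.atTop := by
  have h1 : Filter.Tendsto (fun δ : ℝ => stdGaussPDF δ * δ⁻¹) (nhdsWithin 0 (Set.Ioi 0))
      Filter.atTop :=
    Filter.Tendsto.pos_mul_atTop (stdGaussPDF_pos 0)
      ((stdGaussPDF_cont.tendsto 0).mono_left nhdsWithin_le_nhds) tendsto_inv_nhdsGT_zero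
  have h2 := Filter.tendsto_atTop_add_const_right (nhdsWithin (0:ℝ) (Set.Ioi 0)) (-1 : ℝ) h1
  refine Filter.tendsto_atTop_mono (fun δ => ?_) h2
  unfold huberG
  rw [div_eq_mul_inv]
  have := cdf_nonneg δ
  linarith

lemma huberG_tendsto_zero : Filter.Tendsto huberG Filter.atTop (nhds 0) := by
  have hpdf0 : Filter.Tendsto stdGaussPDF Filter.atTop (nhds 0) := by
    have h1 : Filter.Tendsto (fun δ : ℝ => -δ ^ 2 / 2) Filter.atTop Filter.atBot := by
      apply Filter.Tendsto.atBot_div_const (by norm_num)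
      exact Filter.tendsto_neg_atTop_atBot.comp (Filter.tendsto_pow_atTop two_ne_zero)
    have h2 := (Real.tendsto_exp_atBot).comp h1
    have h3 := h2.const_mul (Real.sqrt (2 * Real.pi))⁻¹
    rw [mul_zero] at h3
    exact h3.congr fun x => rfl
  have hsub : Filter.Tendsto (fun δ : ℝ => (1:ℝ) - stdGaussCDF δ) Filter.atTop
      (nhds ((1:ℝ) - 1)) := Filter.Tendsto.sub tendsto_const_nhds cdf_tendsto_one
  have hmain := (hpdf0.mul tendsto_inv_atTop_zero).sub hsub
  simp only [mul_zero, sub_self, sub_zero] at hmain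
  refine hmain.congr fun δ => ?_
  unfold huberG
  rw [div_eq_mul_inv]

/-- `g` is continuous and strictly decreasing on `(0, ∞)`, tends to `+∞` as `δ → 0⁺`
and to `0` as `δ → ∞`; hence for every `ε ∈ (0,1)` the Huber minimax equation
`g(δ) = ε/(2(1-ε))` has a unique solution `δ* ∈ (0, ∞)`. -/
theorem huber_minimax_unique_solution :
    ContinuousOn huberG (Set.Ioi 0) ∧
    StrictAntiOn huberG (Set.Ioi 0) ∧
    Filter.Tendsto huberG (nhdsWithin 0 (Set.Ioi 0)) Filter.atTop ∧
    Filter.Tendsto huberG Filter.atTop (nhds 0) ∧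
    ∀ ε ∈ Set.Ioo (0 : ℝ) 1,
      ∃! δ : ℝ, δ ∈ Set.Ioi (0 : ℝ) ∧ huberG δ = ε / (2 * (1 - ε)) := by
  refine ⟨huberG_contOn, huberG_anti, huberG_tendsto_atTop, huberG_tendsto_zero, ?_⟩
  intro ε hε
  set c := ε / (2 * (1 - ε)) with hc_def
  have hc : 0 < c := div_pos hε.1 (by nlinarith [hε.2])
  obtain ⟨b, hb1, hb2⟩ : ∃ b : ℝ, 1 ≤ b ∧ huberG b < c :=
    ((Filter.eventually_ge_atTop 1).and
      (huberG_tendsto_zero.eventually_lt_const hc)).exists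
  have hb0 : (0:ℝ) < b := lt_of_lt_of_le one_pos hb1
  obtain ⟨a, ⟨ha0, hab⟩, hac⟩ : ∃ a, a ∈ Set.Ioo 0 b ∧ c < huberG a := by
    have h2 : Set.Ioo 0 b ∈ nhdsWithin (0:ℝ) (Set.Ioi 0) :=
      Ioo_mem_nhdsGT_of_mem ⟨le_refl 0, hb0⟩
    exact ((Filter.eventually_of_mem h2 fun x hx => hx).and
      (huberG_tendsto_atTop.eventually_gt_atTop c)).exists
  have hsub : Set.Icc a b ⊆ Set.Ioi 0 := fun x hx => lt_of_lt_of_le ha0 hx.1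
  obtain ⟨δ, hδmem, hδeq⟩ :=
    intermediate_value_Icc' hab.le (huberG_contOn.mono hsub) ⟨hb2.le, hac.le⟩
  refine ⟨δ, ⟨hsub hδmem, hδeq⟩, ?_⟩
  rintro y ⟨hy0, hyeq⟩
  exact huberG_anti.injOn hy0 (hsub hδmem) (hyeq.trans hδeq.symm)
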